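/- Let G = (V,E,ω) be a weighted undirected graph and k ≥ 1 an integer. Define the k-neighborhood graph 𝒩 = (V,F) where F contains, for each vertex v, edges to its k nearest neighbors (by edge weight, ties broken by vertex ID), or all neighbors if deg(v) < k. Then for every vertex v and every u ∈ S_G[k](v) (the k closest reachable vertices to v in G), any shortest u–v path in G with the minimum number of hops is entirely contained in 𝒩. -/

import Mathlib

/-!
Order the vertices by the key `(d(v, x), minimum hop count, rank x)`, so that `S` consists of the
first `k` vertices other than `v`. If a step `c → b` of the path leaves `b` outside the `k` nearest
neighbours of `c`, then `c` has exactly `k` of them. The prefix of the path ending at `b`, scored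
as `(weight, hops, rank b)`, is no later than `u`. Each nearest neighbour `y` of `c` is reached by
the prefix ending at `c` extended by the edge `c y`, which scores strictly below it because
`(w c y, rank y) < (w c b, rank b)`; and `c` is reached by the prefix ending at `c`, one hop
shorter. So `c` and its `k` nearest neighbours precede `u` and lie in `S`, which together with `u`
gives `S` at least `k + 1` members other than `v`.
-/

open scoped ENNReal

namespace Stmt13

variable {V : Type*}

/-- Endpoint of a walk starting at `u` with subsequent vertices given by the list. -/
def last : V → List V → V
  | u, [] => u
  | _, x :: xs => last x xs

/-- Weight of a walk starting at `u` with subsequent vertices given by the list. -/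
noncomputable def cost (w : V → V → ℝ≥0∞) : V → List V → ℝ≥0∞
  | _, [] => 0
  | u, x :: xs => w u x + cost w x xs

/-- `h`-hop-limited distance from `u` to `v` (non-edges have weight `⊤`). -/
noncomputable def hdist (w : V → V → ℝ≥0∞) (h : ℕ) (u v : V) : ℝ≥0∞ :=
  ⨅ p ∈ {p : List V | p.length ≤ h ∧ last u p = v}, cost w u p

/-- Shortest-path distance from `u` to `v`. -/
noncomputable def dist (w : V → V → ℝ≥0∞) (u v : V) : ℝ≥0∞ :=
  ⨅ h : ℕ, hdist w h u v

/-- `S` is a set of (at most) `k` closest reachable vertices to `v` (excluding `v`),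
with ties broken arbitrarily: members of `S` are reachable and distinct from `v`,
`|S| ≤ k`, every member is at least as close as every reachable non-member, and `S`
has exactly `k` elements unless it already contains all reachable vertices. -/
def IsKClosest [Fintype V] (w : V → V → ℝ≥0∞) (k : ℕ) (v : V) (S : Finset V) : Prop :=
  (∀ u ∈ S, u ≠ v ∧ dist w v u < ⊤) ∧ S.card ≤ k ∧
  (∀ y ∈ S, ∀ z, z ∉ S → z ≠ v → dist w v z < ⊤ → dist w v y ≤ dist w v z) ∧
  (∀ z, z ∉ S → z ≠ v → dist w v z < ⊤ → S.card = k)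

/-- Weight function of the union `G ∪ G^(k)` of the graph with the `k`-shortcut hopset:
hopset edges `(u,v)` (present when `u ∈ S v` or `v ∈ S u`) get weight `d_G(u,v)`. -/
noncomputable def unionW [Fintype V] [DecidableEq V] (w : V → V → ℝ≥0∞) (S : V → Finset V)
    (u v : V) : ℝ≥0∞ :=
  if u ∈ S v ∨ v ∈ S u then min (w u v) (dist w u v) else w u v


/-- Minimum number of hops of a minimum-weight `u`–`v` path. -/
noncomputable def minHopsD (w : V → V → ℝ≥0∞) (u v : V) : ℕ :=
  sInf {ℓ : ℕ | ∃ p : List V, p.length = ℓ ∧ last u p = v ∧ cost w u p = dist w u v}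

/-- Strict comparison of vertices by distance, with ties broken by the tie-breaking
key `tie` (lexicographically). -/
def keyLt (d : V → ℝ≥0∞) (tie : V → ℕ × ℕ) (y z : V) : Prop :=
  Prod.Lex (· < ·) (Prod.Lex (· < ·) (· < ·)) (d y, tie y) (d z, tie z)

/-- `S` is the set of the `k` closest vertices of `dom` to `v` (excluding `v`) with
respect to the distance function `d`, with ties broken by the key `tie`. -/
def IsKNear (d : V → ℝ≥0∞) (tie : V → ℕ × ℕ) (dom : Finset V) (k : ℕ) (v : V)
    (S : Finset V) : Prop :=
  S ⊆ dom ∧ v ∉ S ∧ S.card ≤ k ∧ (∀ y ∈ S, d y < ⊤) ∧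
  (∀ y ∈ S, ∀ z ∈ dom, z ∉ S → z ≠ v → d z < ⊤ → keyLt d tie y z) ∧
  (∀ z ∈ dom, z ≠ v → d z < ⊤ → z ∉ S → S.card = k)

/-- `nb` assigns to every vertex its `k` nearest neighbors, by edge weight with ties
broken by vertex identifiers `rank` (all neighbors if the degree is less than `k`). -/
def IsKNbhd (w : V → V → ℝ≥0∞) (k : ℕ) (rank : V → ℕ) (nb : V → Finset V) : Prop :=
  ∀ v, (∀ u ∈ nb v, u ≠ v ∧ w v u < ⊤) ∧ (nb v).card ≤ k ∧
    (∀ y ∈ nb v, ∀ z, z ∉ nb v → z ≠ v → w v z < ⊤ →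
      w v y < w v z ∨ (w v y = w v z ∧ rank y < rank z)) ∧
    (∀ z, z ≠ v → w v z < ⊤ → z ∉ nb v → (nb v).card = k)

/-- Weight function of the `k`-neighborhood graph `𝒩`: the edge `(u,v)` is kept iff
`v` is among the `k` nearest neighbors of `u` or vice versa. -/
noncomputable def nbhdW [DecidableEq V] (w : V → V → ℝ≥0∞) (nb : V → Finset V)
    (u v : V) : ℝ≥0∞ :=
  if v ∈ nb u ∨ u ∈ nb v then w u v else ⊤

theorem last_append (a : V) (q r : List V) : last a (q ++ r) = last (last a q) r := by
  induction q generalizing a with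
  | nil => rfl
  | cons x xs ih => exact ih x

theorem cost_append (w : V → V → ℝ≥0∞) (a : V) (q r : List V) :
    cost w a (q ++ r) = cost w a q + cost w (last a q) r := by
  induction q generalizing a with
  | nil => simp [cost, last]
  | cons x xs ih => simp [cost, last, ih x, add_assoc]

theorem cost_cons (w : V → V → ℝ≥0∞) (a b : V) (q : List V) :
    cost w a (b :: q) = w a b + cost w b q :=
  rfl

theorem cost_singleton (w : V → V → ℝ≥0∞) (a b : V) : cost w a [b] = w a b := by
  simp [cost]

theorem dist_le_cost (w : V → V → ℝ≥0∞) (a : V) (q : List V) :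
    dist w a (last a q) ≤ cost w a q :=
  iInf_le_of_le q.length <| iInf₂_le q ⟨le_rfl, rfl⟩

theorem minHopsD_le_length {w : V → V → ℝ≥0∞} {a : V} {q : List V}
    (h : cost w a q = dist w a (last a q)) : minHopsD w a (last a q) ≤ q.length :=
  Nat.sInf_le ⟨q, rfl, rfl, h⟩

/-- `keyLt d tie y z` is definitionally `lexKey d tie y < lexKey d tie z`. -/
def lexKey (d : V → ℝ≥0∞) (tie : V → ℕ × ℕ) (y : V) : ℝ≥0∞ ×ₗ (ℕ ×ₗ ℕ) :=
  toLex (d y, toLex (tie y))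

noncomputable def hopKey (w : V → V → ℝ≥0∞) (rank : V → ℕ) (a : V) :
    V → ℝ≥0∞ ×ₗ (ℕ ×ₗ ℕ) :=
  lexKey (dist w a) (fun x => (minHopsD w a x, rank x))

theorem hopKey_last_le (w : V → V → ℝ≥0∞) (rank : V → ℕ) (a : V) (q : List V) :
    hopKey w rank a (last a q) ≤ toLex (cost w a q, toLex (q.length, rank (last a q))) :=
  Prod.Lex.toLex_le_toLex'.2
    ⟨dist_le_cost w a q, fun h => Prod.Lex.toLex_mono ⟨minHopsD_le_length h.symm, le_rfl⟩⟩

def IsMinHopShortest (w : V → V → ℝ≥0∞) (a u : V) (p : List V) : Prop :=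
  last a p = u ∧ cost w a p = dist w a u ∧
    ∀ q : List V, last a q = u → cost w a q = dist w a u → p.length ≤ q.length

namespace IsMinHopShortest

variable {w : V → V → ℝ≥0∞} {a u : V} {p : List V}

theorem minHopsD_eq (hp : IsMinHopShortest w a u p) : minHopsD w a u = p.length := by
  obtain ⟨hlast, hcost, hmin⟩ := hp
  refine le_antisymm (hlast ▸ minHopsD_le_length (hlast ▸ hcost)) ?_
  obtain ⟨q, hq, hqlast, hqcost⟩ := Nat.sInf_mem (⟨p.length, p, rfl, hlast, hcost⟩ :
    {ℓ | ∃ q : List V, q.length = ℓ ∧ last a q = u ∧ cost w a q = dist w a u}.Nonempty)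
  exact (hmin q hqlast hqcost).trans hq.le

/-- Removing the step `last a q → b` would give a walk that is no heavier and shorter. -/
theorem ne_last {q r : List V} {b : V} (hp : IsMinHopShortest w a u (q ++ b :: r)) :
    b ≠ last a q := by
  intro hb
  obtain ⟨hlast, hcost, hmin⟩ := hp
  have hlast' : last a (q ++ r) = u := by
    rw [last_append, ← hb]
    rwa [last_append] at hlast
  have hle : cost w a (q ++ r) ≤ cost w a (q ++ b :: r) := by
    rw [cost_append, cost_append, ← hb, cost_cons]
    gcongr
    exact le_add_self
  have hcost' : cost w a (q ++ r) = dist w a u :=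
    le_antisymm (hle.trans hcost.le) (hlast' ▸ dist_le_cost w a _)
  have := hmin _ hlast' hcost'
  simp only [List.length_append, List.length_cons] at this
  omega

theorem prefix_le_hopKey (rank : V → ℕ) {q r : List V}
    (hp : IsMinHopShortest w a u (q ++ r)) :
    toLex (cost w a q, toLex (q.length, rank (last a q))) ≤ hopKey w rank a u := by
  have hlen := hp.minHopsD_eq
  obtain ⟨hlast, hcost, -⟩ := hp
  refine Prod.Lex.toLex_le_toLex'.2 ⟨?_, fun _ => Prod.Lex.toLex_le_toLex'.2 ⟨?_, fun hn => ?_⟩⟩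
  · rw [← hcost, cost_append]
    exact le_self_add
  · change q.length ≤ minHopsD w a u
    rw [hlen, List.length_append]
    omega
  · obtain rfl : r = [] := by simpa [hlen] using hn
    change rank (last a q) ≤ rank u
    rw [← hlast, List.append_nil]

end IsMinHopShortest

theorem IsKNear.card_erase_lt [DecidableEq V] {d : V → ℝ≥0∞} {tie : V → ℕ × ℕ}
    {dom : Finset V} {k : ℕ} {a u : V} {S T : Finset V} (hS : IsKNear d tie dom k a S)
    (hu : u ∈ S) (hT : T ⊆ dom) (hlt : ∀ t ∈ T, lexKey d tie t < lexKey d tie u) :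
    (T.erase a).card < k := by
  obtain ⟨-, -, hcard, hfin, hclosest, -⟩ := hS
  have huT : u ∉ T.erase a := fun h => lt_irrefl _ (hlt u (Finset.mem_of_mem_erase h))
  have hsub : insert u (T.erase a) ⊆ S := by
    refine Finset.insert_subset hu fun t ht => ?_
    obtain ⟨hta, htT⟩ := Finset.mem_erase.mp ht
    by_contra htS
    have htfin : d t < ⊤ := (Prod.Lex.monotone_fst _ _ (hlt t htT).le).trans_lt (hfin u hu)
    exact lt_asymm (hlt t htT) (hclosest u hu t (hT htT) htS hta htfin)
  calc (T.erase a).card < (insert u (T.erase a)).card := by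
        rw [Finset.card_insert_of_notMem huT]
        omega
    _ ≤ S.card := Finset.card_le_card hsub
    _ ≤ k := hcard

theorem IsMinHopShortest.mem_nb [Fintype V] {w : V → V → ℝ≥0∞} {k : ℕ} {rank : V → ℕ}
    {nb : V → Finset V} (hnb : IsKNbhd w k rank nb) {a u : V} {S : Finset V}
    (hS : IsKNear (dist w a) (fun x => (minHopsD w a x, rank x)) Finset.univ k a S)
    (hu : u ∈ S) {q r : List V} {b : V} (hp : IsMinHopShortest w a u (q ++ b :: r)) :
    b ∈ nb (last a q) := by
  classical
  set c := last a q
  by_contra hb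
  have hB : toLex (cost w a q + w c b, toLex (q.length + 1, rank b)) ≤ hopKey w rank a u := by
    have h := IsMinHopShortest.prefix_le_hopKey rank (q := q ++ [b])
      (List.append_cons q b r ▸ hp)
    rw [cost_append, cost_singleton, List.length_append, List.length_singleton,
      last_append] at h
    exact h
  have hfin : cost w a q + w c b < ⊤ :=
    (Prod.Lex.monotone_fst _ _ hB).trans_lt (hS.2.2.2.1 u hu)
  have hqfin : cost w a q ≠ ⊤ := (le_self_add.trans_lt hfin).ne
  have hwfin : w c b < ⊤ := le_add_self.trans_lt hfin
  have hbc : b ≠ c := hp.ne_last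
  have hkey : ∀ y ∈ insert c (nb c), hopKey w rank a y < hopKey w rank a u := by
    intro y hy
    refine lt_of_lt_of_le ?_ hB
    rcases Finset.mem_insert.mp hy with rfl | hy
    · refine (hopKey_last_le w rank a q).trans_lt (Prod.Lex.toLex_lt_toLex'.2 ⟨le_self_add, ?_⟩)
      exact fun _ => Prod.Lex.toLex_lt_toLex'.2 ⟨by omega, by omega⟩
    · have hy' := hopKey_last_le w rank a (q ++ [y])
      simp only [cost_append, cost_singleton, last_append, List.length_append] at hy'
      refine hy'.trans_lt (Prod.Lex.toLex_lt_toLex.2 ?_)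
      rcases (hnb c).2.2.1 y hy b hb hbc hwfin with hlt | ⟨heq, hrank⟩
      · exact Or.inl (ENNReal.add_lt_add_left hqfin hlt)
      · exact Or.inr ⟨by rw [heq], Prod.Lex.toLex_lt_toLex.2 (Or.inr ⟨rfl, hrank⟩)⟩
  have hcard : (insert c (nb c)).card = k + 1 := by
    rw [Finset.card_insert_of_notMem fun h => ((hnb c).1 c h).1 rfl,
      (hnb c).2.2.2 b hbc hwfin hb]
  have hlt := hS.card_erase_lt hu (Finset.subset_univ _) hkey
  have hle := Finset.pred_card_le_card_erase (s := insert c (nb c)) (a := a)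
  omega

theorem getD_cons_append_length (a d : V) (q r : List V) :
    (a :: (q ++ r)).getD q.length d = last a q := by
  induction q generalizing a with
  | nil => rfl
  | cons x xs ih => simpa [last] using ih x

theorem min_hop_path_in_neighborhood_graph_general [Fintype V]
    (w : V → V → ℝ≥0∞)
    (k : ℕ)
    (rank : V → ℕ)
    (nb : V → Finset V) (hnb : IsKNbhd w k rank nb)
    (v u : V) (S : Finset V)
    (hS : IsKNear (dist w v) (fun x => (minHopsD w v x, rank x)) Finset.univ k v S)
    (hu : u ∈ S)
    (p : List V) (hlast : last v p = u) (hcost : cost w v p = dist w v u)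
    (hmin : ∀ q : List V, last v q = u → cost w v q = dist w v u → p.length ≤ q.length) :
    ∀ j, j + 1 ≤ p.length →
      ((v :: p).getD (j + 1) v) ∈ nb ((v :: p).getD j v) ∨
      ((v :: p).getD j v) ∈ nb ((v :: p).getD (j + 1) v) := by
  intro j hj
  obtain ⟨q, b, r, rfl, rfl⟩ : ∃ q b r, p = q ++ b :: r ∧ q.length = j :=
    ⟨p.take j, p[j], p.drop (j + 1), by simp, List.length_take_of_le (by omega)⟩
  have hb : (v :: (q ++ b :: r)).getD (q.length + 1) v = b := by
    have h := getD_cons_append_length v v (q ++ [b]) r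
    rwa [List.append_assoc, List.singleton_append, List.length_append, List.length_singleton,
      last_append] at h
  left
  rw [hb, getD_cons_append_length]
  exact IsMinHopShortest.mem_nb hnb hS hu ⟨hlast, hcost, hmin⟩

/-- Every minimum-weight, minimum-hop path from `v` to one of its `k` closest
reachable vertices is entirely contained in the `k`-neighborhood graph `𝒩`. -/
theorem min_hop_path_in_neighborhood_graph [Fintype V] [DecidableEq V]
    (w : V → V → ℝ≥0∞) (hsymm : ∀ u v, w u v = w v u)
    (k : ℕ) (hk : 1 ≤ k)
    (rank : V → ℕ) (hrank : Function.Injective rank)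
    (nb : V → Finset V) (hnb : IsKNbhd w k rank nb)
    (v u : V) (S : Finset V)
    (hS : IsKNear (dist w v) (fun x => (minHopsD w v x, rank x)) Finset.univ k v S)
    (hu : u ∈ S)
    (p : List V) (hlast : last v p = u) (hcost : cost w v p = dist w v u)
    (hmin : ∀ q : List V, last v q = u → cost w v q = dist w v u → p.length ≤ q.length) :
    ∀ j, j + 1 ≤ p.length →
      ((v :: p).getD (j + 1) v) ∈ nb ((v :: p).getD j v) ∨
      ((v :: p).getD j v) ∈ nb ((v :: p).getD (j + 1) v) :=
  min_hop_path_in_neighborhood_graph_general w k rank nb hnb v u S hS hu p hlast hcost hmin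

end Stmt13
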